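/- arXiv:2106.02440 — 2 statements merged into one kernel-verified Lean document; each statement's English description precedes it below -/
import Mathlib

section
/- Let Δ ≥ 1 and let a, x be integers with 0 ≤ x and x + 2 ≤ a ≤ Δ. Let Σ' be the family of eight subsets of Σ = {M,P,O,A,X} given by {X}, {M,X}, {O,X}, {M,O,X}, {A,O,X}, {M,A,O,X}, {P,A,O,X}, {M,P,A,O,X}. For every function f : Fin Δ → Σ', there exists a function g : Fin Δ → Σ with g(i) ∈ f(i) for all i whose multiset of values lies in N_Δ(a,x) if and only if at least one of the following holds: (1) the number of indices i with M ∈ f(i) is at least Δ − x; (2) there exists an index i with P ∈ f(i) such that O ∈ f(j) for all j ≠ i; (3) the number of indices i with A ∈ f(i) is at least a. -/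
inductive Lab : Type
  | M | P | O | A | X
  deriving DecidableEq

instance : Fintype Lab where
  elems := {Lab.M, Lab.P, Lab.O, Lab.A, Lab.X}
  complete := by intro l; cases l <;> simp

/-- Node constraint `N_Δ(a,x)`: the three allowed multisets of size `Δ`. -/
def nodeC (Δ a x : ℕ) (m : Multiset Lab) : Prop :=
  m = Multiset.replicate (Δ - x) Lab.M + Multiset.replicate x Lab.X ∨
  m = Multiset.replicate a Lab.A + Multiset.replicate (Δ - a) Lab.X ∨
  m = Lab.P ::ₘ Multiset.replicate (Δ - 1) Lab.O

/-- Edge constraint `E`: all unordered pairs except `{M,M}, {A,A}, {P,P}, {P,A}, {P,O}`. -/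
def edgeC (l₁ l₂ : Lab) : Prop :=
  ¬ ((l₁ = Lab.M ∧ l₂ = Lab.M) ∨ (l₁ = Lab.A ∧ l₂ = Lab.A) ∨ (l₁ = Lab.P ∧ l₂ = Lab.P) ∨
     (l₁ = Lab.P ∧ l₂ = Lab.A) ∨ (l₁ = Lab.A ∧ l₂ = Lab.P) ∨
     (l₁ = Lab.P ∧ l₂ = Lab.O) ∨ (l₁ = Lab.O ∧ l₂ = Lab.P))

instance (l₁ l₂ : Lab) : Decidable (edgeC l₁ l₂) := by
  unfold edgeC; infer_instance

/-- A valid `Π_Δ(a,x)`-labeling: `ℓ u v` is the label that `u` assigns to the edge `{u,v}`. -/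
def validLabeling {V : Type*} [Fintype V] (G : SimpleGraph V) [DecidableRel G.Adj]
    (Δ a x : ℕ) (ℓ : V → V → Lab) : Prop :=
  (∀ v : V, nodeC Δ a x ((G.neighborFinset v).val.map (ℓ v))) ∧
  (∀ u v : V, G.Adj u v → edgeC (ℓ u v) (ℓ v u))

/-- The alphabet `Σ'` of `re(Π_Δ(a,x))`: eight subsets of `Σ`. -/
def sigmaRE : Set (Finset Lab) :=
  {({Lab.X} : Finset Lab), {Lab.M, Lab.X}, {Lab.O, Lab.X}, {Lab.M, Lab.O, Lab.X},
   {Lab.A, Lab.O, Lab.X}, {Lab.M, Lab.A, Lab.O, Lab.X},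
   {Lab.P, Lab.A, Lab.O, Lab.X}, {Lab.M, Lab.P, Lab.A, Lab.O, Lab.X}}

/-
Each label set of `Σ'` contains `X`, so a configuration of type `M^(Δ-x) X^x` or `A^a X^(Δ-a)`
can be picked as soon as enough sets contain `M` (resp. `A`): take `M` (resp. `A`) there and `X`
elsewhere. Conversely, a transversal realizing a configuration witnesses the corresponding
condition by counting its `M`s or `A`s, or by locating its unique `P`.
-/

open Finset

section Transversal

variable {ι α : Type*} [Fintype ι]

theorem count_map_univ_le_card_filter_mem [DecidableEq α] {f : ι → Finset α} {g : ι → α}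
    (hg : ∀ i, g i ∈ f i) (l : α) :
    (univ.val.map g).count l ≤ #{i | l ∈ f i} := by
  rw [Multiset.count_map]
  exact Multiset.card_le_card <| Multiset.monotone_filter_right _ fun i h => h ▸ hg i

theorem map_univ_ite_mem [DecidableEq ι] (S : Finset ι) (u v : α) :
    univ.val.map (fun i => if i ∈ S then u else v)
      = Multiset.replicate #S u + Multiset.replicate (Fintype.card ι - #S) v := by
  have hsplit : univ.val = S.val + Sᶜ.val := by
    rw [← disjUnion_val S Sᶜ disjoint_compl_right, disjUnion_eq_union, union_compl]
  rw [hsplit, Multiset.map_add,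
    Multiset.map_congr rfl fun i (hi : i ∈ S) => if_pos hi,
    Multiset.map_congr rfl fun i (hi : i ∈ Sᶜ) => if_neg (mem_compl.mp hi),
    Multiset.map_const', Multiset.map_const', ← card_compl]
  rfl

theorem exists_eq_and_forall_ne_eq_of_map_univ_eq_cons_replicate
    {g : ι → α} {p o : α} {n : ℕ} (h : univ.val.map g = p ::ₘ Multiset.replicate n o) :
    ∃ i, g i = p ∧ ∀ j, j ≠ i → g j = o := by
  classical
  obtain ⟨i, -, hi⟩ := Multiset.mem_map.mp (h ▸ Multiset.mem_cons_self p _)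
  rw [← univ.insert_erase (mem_univ i), insert_val_of_notMem (notMem_erase i univ),
    Multiset.map_cons, hi, Multiset.cons_inj_right] at h
  exact ⟨i, hi, fun j hj => Multiset.eq_of_mem_replicate <|
    h ▸ Multiset.mem_map_of_mem g (mem_erase.mpr ⟨hj, mem_univ j⟩)⟩

theorem exists_transversal_map_univ_eq_replicate_add_replicate [DecidableEq α]
    {f : ι → Finset α} {l d : α} {n : ℕ} (hn : n ≤ #{i | l ∈ f i}) (hd : ∀ i, d ∈ f i) :
    ∃ g : ι → α, (∀ i, g i ∈ f i) ∧
      univ.val.map g = Multiset.replicate n l + Multiset.replicate (Fintype.card ι - n) d := by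
  classical
  obtain ⟨S, hS, rfl⟩ := exists_subset_card_eq hn
  refine ⟨fun i => if i ∈ S then l else d, fun i => ?_, map_univ_ite_mem S l d⟩
  by_cases hi : i ∈ S
  · simpa [hi] using (mem_filter.mp (hS hi)).2
  · simpa [hi] using hd i

theorem exists_transversal_map_univ_eq_cons_replicate {f : ι → Finset α} {p o : α} {i : ι}
    (hp : p ∈ f i) (ho : ∀ j, j ≠ i → o ∈ f j) :
    ∃ g : ι → α, (∀ j, g j ∈ f j) ∧
      univ.val.map g = p ::ₘ Multiset.replicate (Fintype.card ι - 1) o := by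
  classical
  refine ⟨fun j => if j ∈ ({i} : Finset ι) then p else o, fun j => ?_, ?_⟩
  · by_cases hj : j = i
    · simpa [hj] using hp
    · simpa [hj] using ho j hj
  · rw [map_univ_ite_mem, card_singleton, Multiset.replicate_one, Multiset.singleton_add]

end Transversal

theorem X_mem_of_mem_sigmaRE {s : Finset Lab} (hs : s ∈ sigmaRE) : Lab.X ∈ s := by
  simp only [sigmaRE, Set.mem_insert_iff, Set.mem_singleton_iff] at hs
  rcases hs with rfl | rfl | rfl | rfl | rfl | rfl | rfl | rfl <;> decide

theorem stmt_2_general (Δ a x : ℕ) (hax : x + 2 ≤ a) (haΔ : a ≤ Δ)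
    (f : Fin Δ → Finset Lab) (hf : ∀ i, f i ∈ sigmaRE) :
    (∃ g : Fin Δ → Lab, (∀ i, g i ∈ f i) ∧
        nodeC Δ a x (Finset.univ.val.map g)) ↔
      (Δ - x ≤ (Finset.univ.filter (fun i => Lab.M ∈ f i)).card ∨
       (∃ i, Lab.P ∈ f i ∧ ∀ j, j ≠ i → Lab.O ∈ f j) ∨
       a ≤ (Finset.univ.filter (fun i => Lab.A ∈ f i)).card) := by
  have hX : ∀ i, Lab.X ∈ f i := fun i => X_mem_of_mem_sigmaRE (hf i)
  constructor
  · rintro ⟨g, hg, hnode | hnode | hnode⟩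
    · left
      simpa [hnode, Multiset.count_replicate] using count_map_univ_le_card_filter_mem hg Lab.M
    · right; right
      simpa [hnode, Multiset.count_replicate] using count_map_univ_le_card_filter_mem hg Lab.A
    · right; left
      obtain ⟨i, hi, hO⟩ := exists_eq_and_forall_ne_eq_of_map_univ_eq_cons_replicate hnode
      exact ⟨i, hi ▸ hg i, fun j hj => hO j hj ▸ hg j⟩
  · rintro (hM | ⟨i, hP, hO⟩ | hA)
    · obtain ⟨g, hg, hmap⟩ := exists_transversal_map_univ_eq_replicate_add_replicate hM hX
      refine ⟨g, hg, Or.inl ?_⟩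
      rw [hmap, Fintype.card_fin, Nat.sub_sub_self (by omega : x ≤ Δ)]
    · obtain ⟨g, hg, hmap⟩ := exists_transversal_map_univ_eq_cons_replicate hP hO
      exact ⟨g, hg, Or.inr <| Or.inr <| by rw [hmap, Fintype.card_fin]⟩
    · obtain ⟨g, hg, hmap⟩ := exists_transversal_map_univ_eq_replicate_add_replicate hA hX
      exact ⟨g, hg, Or.inr <| Or.inl <| by rw [hmap, Fintype.card_fin]⟩

/-- For `x + 2 ≤ a ≤ Δ` and any `f : Fin Δ → Σ'`, there is a transversal
`g` of `f` whose multiset of values lies in `N_Δ(a,x)` if and only if (1) at least `Δ − x`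
of the sets contain `M`, or (2) some set contains `P` while all others contain `O`, or
(3) at least `a` of the sets contain `A`. -/
theorem stmt_2 (Δ a x : ℕ) (hΔ : 1 ≤ Δ) (hax : x + 2 ≤ a) (haΔ : a ≤ Δ)
    (f : Fin Δ → Finset Lab) (hf : ∀ i, f i ∈ sigmaRE) :
    (∃ g : Fin Δ → Lab, (∀ i, g i ∈ f i) ∧
        nodeC Δ a x (Finset.univ.val.map g)) ↔
      (Δ - x ≤ (Finset.univ.filter (fun i => Lab.M ∈ f i)).card ∨
       (∃ i, Lab.P ∈ f i ∧ ∀ j, j ≠ i → Lab.O ∈ f j) ∨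
       a ≤ (Finset.univ.filter (fun i => Lab.A ∈ f i)).card) :=
  stmt_2_general Δ a x hax haΔ f hf
end

section
/- Let Δ ≥ 1 and let a, a', x, x' be integers with 0 ≤ a ≤ a' ≤ Δ and 0 ≤ x' ≤ x ≤ Δ. If a finite Δ-regular simple graph G admits a valid Π_Δ(a',x')-labeling, then G admits a valid Π_Δ(a,x)-labeling. -/
open Multiset Finset

theorem Finset.map_piecewise_add_map {α β : Type*} [DecidableEq α] {s t : Finset α}
    (hts : t ⊆ s) (f g : α → β) :
    s.val.map (t.piecewise g f) + t.val.map f = s.val.map f + t.val.map g := by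
  have hs : s.val = t.val + (s \ t).val := by
    rw [sdiff_val, add_tsub_cancel_of_le (val_le_iff.2 hts)]
  have hin : t.val.map (t.piecewise g f) = t.val.map g :=
    Multiset.map_congr rfl fun w hw => piecewise_eq_of_mem _ _ _ hw
  have hout : (s \ t).val.map (t.piecewise g f) = (s \ t).val.map f :=
    Multiset.map_congr rfl fun w hw => piecewise_eq_of_notMem _ _ _ (Finset.mem_sdiff.1 hw).2
  rw [hs, Multiset.map_add, Multiset.map_add, hin, hout]
  abel

theorem Finset.exists_map_piecewise_const_eq {α β : Type*} [DecidableEq α] [DecidableEq β]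
    {s : Finset α} {f : α → β} {b : β} {j k : ℕ} {m : Multiset β} (c : β)
    (h : s.val.map f = replicate (j + k) b + m) :
    ∃ t : Finset α, s.val.map (t.piecewise (fun _ => c) f) = replicate j c + replicate k b + m := by
  have hcard : j ≤ #(s.filter (f · = b)) := by
    have hcount : count b (s.val.map f) = #(s.filter (f · = b)) := by
      simp only [count_map, Finset.card_def, filter_val, eq_comm]
    rw [← hcount, h, count_add, count_replicate_self]
    omega
  obtain ⟨t, hts, rfl⟩ := Finset.exists_subset_card_eq hcard
  have htb : t.val.map f = replicate #t b :=
    eq_replicate.2 ⟨Multiset.card_map _ _, by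
      rintro _ hv
      obtain ⟨w, hw, rfl⟩ := Multiset.mem_map.1 hv
      exact (Finset.mem_filter.1 (hts hw)).2⟩
  refine ⟨t, add_right_cancel (b := replicate #t b) ?_⟩
  have hsplit := Finset.map_piecewise_add_map (hts.trans (filter_subset _ _)) f (fun _ => c)
  rw [htb, map_const', h] at hsplit
  rw [hsplit, replicate_add]
  simp only [Finset.card_val]
  abel

theorem edgeC_ite_X {p q : Prop} [Decidable p] [Decidable q] {l₁ l₂ : Lab} (h : edgeC l₁ l₂) :
    edgeC (if p then Lab.X else l₁) (if q then Lab.X else l₂) := by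
  split_ifs
  all_goals first | exact h | cases l₁ <;> cases l₂ <;> decide

theorem exists_nodeC_piecewise_X {α : Type*} [DecidableEq α] {s : Finset α} {f : α → Lab}
    {Δ a a' x x' : ℕ} (haa' : a ≤ a') (ha'Δ : a' ≤ Δ) (hx'x : x' ≤ x) (hxΔ : x ≤ Δ)
    (h : nodeC Δ a' x' (s.val.map f)) :
    ∃ t : Finset α, nodeC Δ a x (s.val.map (t.piecewise (fun _ => Lab.X) f)) := by
  rcases h with hM | hA | hP
  · obtain ⟨t, ht⟩ := exists_map_piecewise_const_eq (j := x - x') (k := Δ - x) Lab.X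
      (by rw [hM, show Δ - x' = x - x' + (Δ - x) by omega])
    refine ⟨t, Or.inl ?_⟩
    have hX : replicate (x - x') Lab.X + replicate x' Lab.X = replicate x Lab.X := by
      rw [← replicate_add, Nat.sub_add_cancel hx'x]
    rw [ht, ← hX]
    abel
  · obtain ⟨t, ht⟩ := exists_map_piecewise_const_eq (j := a' - a) (k := a) Lab.X
      (by rw [hA, Nat.sub_add_cancel haa'])
    refine ⟨t, Or.inr (Or.inl ?_)⟩
    have hX : replicate (a' - a) Lab.X + replicate (Δ - a') Lab.X = replicate (Δ - a) Lab.X := by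
      rw [← replicate_add]; congr 1; omega
    rw [ht, ← hX]
    abel
  · exact ⟨∅, Or.inr (Or.inr (by rwa [piecewise_empty]))⟩

theorem stmt_5_general {V : Type*} [Fintype V] (G : SimpleGraph V) [DecidableRel G.Adj]
    (Δ a a' x x' : ℕ) (haa' : a ≤ a') (ha'Δ : a' ≤ Δ)
    (hx'x : x' ≤ x) (hxΔ : x ≤ Δ)
    (ℓ' : V → V → Lab) (hvalid : validLabeling G Δ a' x' ℓ') :
    ∃ ℓ : V → V → Lab, validLabeling G Δ a x ℓ := by
  classical
  choose t ht using fun v => exists_nodeC_piecewise_X haa' ha'Δ hx'x hxΔ (hvalid.1 v)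
  exact ⟨fun v => (t v).piecewise (fun _ => Lab.X) (ℓ' v), ht,
    fun u v huv => edgeC_ite_X (hvalid.2 u v huv)⟩

/-- (Monotonicity, Lemma 3.5.) Decreasing `a` and increasing `x` does not
make the problem harder: a valid `Π_Δ(a',x')`-labeling yields a valid `Π_Δ(a,x)`-labeling,
for `a ≤ a' ≤ Δ` and `x' ≤ x ≤ Δ`. -/
theorem stmt_5 {V : Type*} [Fintype V] (G : SimpleGraph V) [DecidableRel G.Adj]
    (Δ a a' x x' : ℕ) (hΔ : 1 ≤ Δ) (haa' : a ≤ a') (ha'Δ : a' ≤ Δ)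
    (hx'x : x' ≤ x) (hxΔ : x ≤ Δ)
    (hreg : G.IsRegularOfDegree Δ)
    (ℓ' : V → V → Lab) (hvalid : validLabeling G Δ a' x' ℓ') :
    ∃ ℓ : V → V → Lab, validLabeling G Δ a x ℓ :=
  stmt_5_general G Δ a a' x x' haa' ha'Δ hx'x hxΔ ℓ' hvalid
end
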